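/- arXiv:1807.11133 — 4 statements merged into one kernel-verified Lean document; each statement's English description precedes it below -/
import Mathlib

section
/- Let α, β be real numbers with 4α + 6β² − 5β ≠ 0 and 2β ≠ 1. Define c_P = 3(−3β² − 2α + 2β) and c_B = 2(12αβ² + 8α² − 8αβ − 4β² − 3α + 3β)/(2β−1)². Then c_P − c_B = −(4α + 6β² − 5β)²/(2β−1)², and in particular c_P < c_B. -/
theorem parabolic_sub_B₂_coeff_eq {K : Type*} [Field K] (α β : K) (hβ : 2*β - 1 ≠ 0) :
    3*(-3*β^2 - 2*α + 2*β) - 2*(12*α*β^2 + 8*α^2 - 8*α*β - 4*β^2 - 3*α + 3*β)/(2*β-1)^2 =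
      -(4*α + 6*β^2 - 5*β)^2/(2*β-1)^2 := by
  rw [sub_eq_iff_eq_add, ← add_div, eq_div_iff (pow_ne_zero 2 hβ)]
  ring

theorem stmt_0 (α β : ℝ) (h1 : 4*α + 6*β^2 - 5*β ≠ 0) (h2 : 2*β ≠ 1)
    (cP cB : ℝ)
    (hcP : cP = 3*(-3*β^2 - 2*α + 2*β))
    (hcB : cB = 2*(12*α*β^2 + 8*α^2 - 8*α*β - 4*β^2 - 3*α + 3*β)/(2*β-1)^2) :
    cP - cB = -(4*α + 6*β^2 - 5*β)^2/(2*β-1)^2 ∧ cP < cB := by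
  have hβ : 2*β - 1 ≠ 0 := sub_ne_zero.mpr h2
  have heq : cP - cB = -(4*α + 6*β^2 - 5*β)^2/(2*β-1)^2 := by
    rw [hcP, hcB]
    exact parabolic_sub_B₂_coeff_eq α β hβ
  refine ⟨heq, sub_neg.mp ?_⟩
  rw [heq, neg_div, neg_lt_zero]
  exact div_pos (sq_pos_of_ne_zero h1) (sq_pos_of_ne_zero hβ)
end

section
/- Let α, β be real numbers with 4α + 6β² − 5β ≠ 0 and 6β ≠ 1. Define c_P = 3(−3β² − 2α + 2β) and c_F = 6(−36β² + 24β + 1 − 24α)(−α + β)/(−6β+1)². Then c_P − c_F = −9(4α + 6β² − 5β)²/(6β−1)², and in particular c_P < c_F. -/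
lemma parabolic_coeff_sub_flecnodal_coeff {K : Type*} [Field K] (α β : K) (hβ : 6*β - 1 ≠ 0) :
    3*(-3*β^2 - 2*α + 2*β) - 6*(-36*β^2 + 24*β + 1 - 24*α)*(-α + β)/(-6*β+1)^2
      = -9*(4*α + 6*β^2 - 5*β)^2/(6*β-1)^2 := by
  have hsq : (6*β - 1)^2 ≠ 0 := pow_ne_zero 2 hβ
  rw [show (-6*β + 1)^2 = (6*β - 1)^2 by ring, eq_div_iff hsq, sub_mul, div_mul_cancel₀ _ hsq]
  ring

theorem stmt_2 (α β : ℝ) (h1 : 4*α + 6*β^2 - 5*β ≠ 0) (h2 : 6*β ≠ 1)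
    (cP cF : ℝ)
    (hcP : cP = 3*(-3*β^2 - 2*α + 2*β))
    (hcF : cF = 6*(-36*β^2 + 24*β + 1 - 24*α)*(-α + β)/(-6*β+1)^2) :
    cP - cF = -9*(4*α + 6*β^2 - 5*β)^2/(6*β-1)^2 ∧ cP < cF := by
  have hdiff : cP - cF = -9*(4*α + 6*β^2 - 5*β)^2/(6*β-1)^2 :=
    hcP ▸ hcF ▸ parabolic_coeff_sub_flecnodal_coeff α β (sub_ne_zero.mpr h2)
  have hneg : -9*(4*α + 6*β^2 - 5*β)^2/(6*β-1)^2 < 0 := by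
    rw [neg_mul, neg_div, neg_lt_zero]
    positivity
  exact ⟨hdiff, sub_neg.mp (hdiff ▸ hneg)⟩
end

section
/- Let α, β be real numbers with 4α + 6β² − 5β ≠ 0, 2β ≠ 1, and 6β ≠ 1. Define c_B = 2(12αβ² + 8α² − 8αβ − 4β² − 3α + 3β)/(2β−1)² and c_F = 6(−36β² + 24β + 1 − 24α)(−α + β)/(−6β+1)². Then c_B > c_F if and only if β > 1/3. -/
theorem stmt_5 (α β : ℝ) (h1 : 4*α + 6*β^2 - 5*β ≠ 0) (h2 : 2*β ≠ 1) (h3 : 6*β ≠ 1)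
    (cB cF : ℝ)
    (hcB : cB = 2*(12*α*β^2 + 8*α^2 - 8*α*β - 4*β^2 - 3*α + 3*β)/(2*β-1)^2)
    (hcF : cF = 6*(-36*β^2 + 24*β + 1 - 24*α)*(-α + β)/(-6*β+1)^2) :
    cB > cF ↔ β > 1/3 := by
  have h2' : 2*β - 1 ≠ 0 := by intro h; apply h2; linarith
  have h3' : -6*β + 1 ≠ 0 := by intro h; apply h3; linarith
  have hQ : (4*α + 6*β^2 - 5*β)^2 > 0 := pow_two_pos_of_ne_zero h1
  have hd1 : (2*β-1)^2 > 0 := pow_two_pos_of_ne_zero h2'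
  have hd2 : (-6*β+1)^2 > 0 := pow_two_pos_of_ne_zero h3'
  have hden : (2*β-1)^2 * (-6*β+1)^2 > 0 := mul_pos hd1 hd2
  have key : (cB - cF) * ((2*β-1)^2 * (-6*β+1)^2)
      = 8*(3*β-1)*(4*α + 6*β^2 - 5*β)^2 := by
    subst hcB hcF
    rw [div_sub_div _ _ (pow_ne_zero 2 h2') (pow_ne_zero 2 h3'),
      div_mul_cancel₀ _ (mul_ne_zero (pow_ne_zero 2 h2') (pow_ne_zero 2 h3'))]
    ring
  constructor
  · intro h
    have hp : (cB - cF) * ((2*β-1)^2 * (-6*β+1)^2) > 0 :=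
      mul_pos (by linarith) hden
    rw [key] at hp
    by_contra hb
    push_neg at hb
    nlinarith
  · intro h
    have hnum : 8*(3*β-1)*(4*α + 6*β^2 - 5*β)^2 > 0 := by nlinarith
    rw [← key] at hnum
    by_contra hb
    push_neg at hb
    nlinarith
end

section
/- Let α, β be real numbers and A the 2×2 matrix with rows (3β, 1) and (6(α−β), 1/2 − 3β). Set D = −6β² − 4α + 5β. Then: (i) if D < 0, A has two real eigenvalues of opposite signs (det A < 0, folded saddle); (ii) if 0 < D < 1/24, A has two distinct real eigenvalues of the same sign (folded node); (iii) if D > 1/24, A has non-real complex eigenvalues (folded focus). -/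
lemma matHasEig {K : Type*} [Field K]
    (A : Matrix (Fin 2) (Fin 2) K) (μ : K) (v : Fin 2 → K) (hv : v ≠ 0)
    (h : A.mulVec v = μ • v) :
    Module.End.HasEigenvalue (Matrix.toLin' A) μ := by
  apply Module.End.hasEigenvalue_of_hasEigenvector (x := v)
  refine ⟨?_, hv⟩
  rw [Module.End.mem_eigenspace_iff, Matrix.toLin'_apply, h]

lemma eigRoot (α β : ℝ) (s : ℝ)
    (h : Module.End.HasEigenvalue
      (Matrix.toLin' (!![3*β, 1; 6*(α - β), 1/2 - 3*β] : Matrix (Fin 2) (Fin 2) ℝ)) s) :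
    s^2 - s/2 + (3/2)*(-6*β^2 - 4*α + 5*β) = 0 := by
  obtain ⟨v, hv⟩ := h.exists_hasEigenvector
  have hveq : (!![3*β, 1; 6*(α - β), 1/2 - 3*β] : Matrix (Fin 2) (Fin 2) ℝ).mulVec v = s • v := by
    have := hv.apply_eq_smul
    rwa [Matrix.toLin'_apply] at this
  have h0 := congrFun hveq 0
  have h1 := congrFun hveq 1
  simp [Matrix.mulVec, dotProduct, Fin.sum_univ_two] at h0 h1
  have hvne := hv.2
  by_cases ha : v 0 = 0
  · exfalso
    have hb : v 1 = 0 := by rw [ha] at h0; linarith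
    apply hvne
    funext i; fin_cases i <;> assumption
  · have hb : v 1 = (s - 3*β) * v 0 := by linarith
    rw [hb] at h1
    have : (s^2 - s/2 + (3/2)*(-6*β^2 - 4*α + 5*β)) * v 0 = 0 := by linear_combination -h1
    rcases mul_eq_zero.mp this with h | h
    · exact h
    · exact absurd h ha

theorem stmt_16 (α β : ℝ)
    (A : Matrix (Fin 2) (Fin 2) ℝ)
    (hA : A = !![3*β, 1; 6*(α - β), 1/2 - 3*β])
    (D : ℝ) (hD : D = -6*β^2 - 4*α + 5*β) :
    (D < 0 → A.det < 0 ∧ ∃ s t : ℝ, s < 0 ∧ 0 < t ∧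
        Module.End.HasEigenvalue (Matrix.toLin' A) s ∧
        Module.End.HasEigenvalue (Matrix.toLin' A) t) ∧
    (0 < D ∧ D < 1/24 → ∃ s t : ℝ, s ≠ t ∧ 0 < s*t ∧
        Module.End.HasEigenvalue (Matrix.toLin' A) s ∧
        Module.End.HasEigenvalue (Matrix.toLin' A) t) ∧
    (D > 1/24 → (∀ s : ℝ, ¬ Module.End.HasEigenvalue (Matrix.toLin' A) s) ∧
        ∃ z : ℂ, z.im ≠ 0 ∧
          Module.End.HasEigenvalue (Matrix.toLin' (A.map (Complex.ofReal))) z) := by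
  have key : ∀ s : ℝ, s^2 - s/2 + (3/2)*D = 0 →
      Module.End.HasEigenvalue (Matrix.toLin' A) s := by
    intro s hs
    apply matHasEig A s ![1, s - 3*β]
    · intro h
      have := congrFun h 0
      simp at this
    · funext i
      fin_cases i
      · simp [hA, Matrix.mulVec, dotProduct, Fin.sum_univ_two]
      · simp [hA, Matrix.mulVec, dotProduct, Fin.sum_univ_two]
        nlinarith [hs, hD]
  refine ⟨?_, ?_, ?_⟩
  · intro hDneg
    constructor
    · rw [hA]
      simp [Matrix.det_fin_two_of]
      nlinarith
    · set r := Real.sqrt (1/4 - 6*D) with hr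
      have hr2 : r^2 = 1/4 - 6*D := Real.sq_sqrt (by linarith)
      have hrgt : r > 1/2 := by
        nlinarith [Real.sqrt_nonneg (1/4 - 6*D)]
      refine ⟨1/4 - r/2, 1/4 + r/2, by linarith, by linarith, ?_, ?_⟩
      · exact key _ (by nlinarith)
      · exact key _ (by nlinarith)
  · rintro ⟨hD1, hD2⟩
    set r := Real.sqrt (1/4 - 6*D) with hr
    have hr2 : r^2 = 1/4 - 6*D := Real.sq_sqrt (by linarith)
    have hrpos : 0 < r := Real.sqrt_pos.mpr (by linarith)
    refine ⟨1/4 - r/2, 1/4 + r/2, by intro h; nlinarith, by nlinarith, ?_, ?_⟩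
    · exact key _ (by nlinarith)
    · exact key _ (by nlinarith)
  · intro hDbig
    constructor
    · intro s hs
      rw [hA] at hs
      have := eigRoot α β s hs
      rw [← hD] at this
      nlinarith [sq_nonneg (s - 1/4)]
    · set y := Real.sqrt (3*D/2 - 1/16) with hy
      have hy2 : y^2 = 3*D/2 - 1/16 := Real.sq_sqrt (by linarith)
      have hypos : 0 < y := Real.sqrt_pos.mpr (by linarith)
      set z : ℂ := 1/4 + (y : ℝ) * Complex.I with hz
      have him : z.im = y := by simp [hz]
      have hy2' : (y : ℂ)^2 = ((3*D/2 - 1/16 : ℝ) : ℂ) := by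
        rw [← Complex.ofReal_pow, hy2]
      push_cast at hy2'
      have hzeq : z^2 - z/2 + (3/2)*(D : ℂ) = 0 := by
        rw [hz]
        linear_combination ((y:ℂ)^2) * Complex.I_sq - hy2'
      have hDc : (D : ℂ) = -6*(β:ℂ)^2 - 4*(α:ℂ) + 5*(β:ℂ) := by
        rw [hD]; push_cast; ring
      refine ⟨z, by rw [him]; exact hypos.ne', ?_⟩
      apply matHasEig _ z ![1, z - 3*β]
      · intro h
        have := congrFun h 0
        simp at this
      · funext i
        fin_cases i
        · simp [hA, Matrix.mulVec, dotProduct, Fin.sum_univ_two, Matrix.map_apply]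
        · simp [hA, Matrix.mulVec, dotProduct, Fin.sum_univ_two, Matrix.map_apply]
          linear_combination -hzeq + (3/2) * hDc
end
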